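/- Let 0 < λ ≤ 1, d_± = (1 ± √λ)². The Marčenko–Pastur density p(x) = √((d_+ − x)(x − d_−)) / (2πλx) on [d_−, d_+] satisfies ∫_{d_−}^{d_+} p(x)/(d_+ − x) dx = 1/(√λ (1 + √λ)). -/

import Mathlib

/-!
Write `s = √λ`, `a = (1 - s)²`, `b = (1 + s)²` and `S = √((b - x)(x - a))`. Then
`√((b - x)(x - a)) / (x (b - x)) = 1 / S - a / (x S)`, and both terms have arcsin primitives:
`arcsin ((2x - a - b) / (b - a))` and `√(a / b) · arcsin (((a + b) x - 2ab) / ((b - a) x))`,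
whose arguments run from `-1` to `1` over `[a, b]`. Hence the integral over `[a, b]` is
`π (1 - √(a / b))`, and for `λ ≤ 1` we have `√(a / b) = (1 - s) / (1 + s)`, so dividing by
`2πλ = 2πs²` gives `1 / (s (1 + s))`.
-/

open Real

theorem hasDerivAt_arcsin_comp_of_one_sub_sq {f : ℝ → ℝ} {f' x r : ℝ} (hf : HasDerivAt f f' x)
    (hr : 0 < r) (h : 1 - f x ^ 2 = r ^ 2) :
    HasDerivAt (fun y => arcsin (f y)) (f' / r) x := by
  have hlt : |f x| < 1 := by
    rw [← sq_lt_one_iff_abs_lt_one]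
    nlinarith [pow_pos hr 2]
  obtain ⟨hgt, hlt⟩ := abs_lt.mp hlt
  refine ((hasDerivAt_arcsin hgt.ne' hlt.ne).comp x hf).congr_deriv ?_
  rw [h, sqrt_sq hr.le]
  ring

section Edge

variable {a b x : ℝ}

theorem hasDerivAt_arcsin_chord (hax : a < x) (hxb : x < b) :
    HasDerivAt (fun y => arcsin ((2 * y - a - b) / (b - a)))
      (1 / √((b - x) * (x - a))) x := by
  have hba : 0 < b - a := by linarith
  have hS : 0 < √((b - x) * (x - a)) := sqrt_pos.mpr (by nlinarith)
  have hS2 : √((b - x) * (x - a)) ^ 2 = (b - x) * (x - a) := sq_sqrt (by nlinarith)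
  have hf : HasDerivAt (fun y => (2 * y - a - b) / (b - a)) (2 / (b - a)) x := by
    simpa using (((hasDerivAt_id x).const_mul 2).sub_const a |>.sub_const b).div_const (b - a)
  exact hasDerivAt_arcsin_comp_of_one_sub_sq hf (r := 2 * √((b - x) * (x - a)) / (b - a))
    (by positivity) (by field_simp; rw [hS2]; ring) |>.congr_deriv (by field_simp)

theorem hasDerivAt_sqrt_mul_arcsin_moebius (ha : 0 ≤ a) (hax : a < x) (hxb : x < b) :
    HasDerivAt (fun y => √(a / b) * arcsin (((a + b) * y - 2 * a * b) / ((b - a) * y)))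
      (a / (x * √((b - x) * (x - a)))) x := by
  rcases ha.eq_or_lt with rfl | ha
  · simpa using hasDerivAt_const x (0 : ℝ)
  have hx : 0 < x := ha.trans hax
  have hb : 0 < b := hx.trans hxb
  have hba : 0 < b - a := by linarith
  have hS : 0 < √((b - x) * (x - a)) := sqrt_pos.mpr (by nlinarith)
  have hS2 : √((b - x) * (x - a)) ^ 2 = (b - x) * (x - a) := sq_sqrt (by nlinarith)
  have hA2 : √a ^ 2 = a := sq_sqrt ha.le
  have hB2 : √b ^ 2 = b := sq_sqrt hb.le
  have hf : HasDerivAt (fun y => ((a + b) * y - 2 * a * b) / ((b - a) * y))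
      (2 * a * b / ((b - a) * x ^ 2)) x := by
    refine ((((hasDerivAt_id x).const_mul (a + b)).sub_const (2 * a * b)).div
      ((hasDerivAt_id x).const_mul (b - a)) (by positivity)).congr_deriv ?_
    simp only [id]
    field_simp
    ring
  have := (hasDerivAt_arcsin_comp_of_one_sub_sq hf
    (r := 2 * √a * √b * √((b - x) * (x - a)) / ((b - a) * x)) (by positivity)
    (by field_simp; rw [hS2, hA2, hB2]; ring)).const_mul (√(a / b))
  refine this.congr_deriv ?_
  rw [sqrt_div' _ hb.le]
  field_simp
  rw [hB2]

noncomputable def edgePrimitive (a b x : ℝ) : ℝ :=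
  arcsin ((2 * x - a - b) / (b - a)) -
    √(a / b) * arcsin (((a + b) * x - 2 * a * b) / ((b - a) * x))

theorem hasDerivAt_edgePrimitive (ha : 0 ≤ a) (hax : a < x) (hxb : x < b) :
    HasDerivAt (edgePrimitive a b) (√((b - x) * (x - a)) / (x * (b - x))) x := by
  have hx : 0 < x := ha.trans_lt hax
  have hS : 0 < √((b - x) * (x - a)) := sqrt_pos.mpr (by nlinarith)
  have hS2 : √((b - x) * (x - a)) ^ 2 = (b - x) * (x - a) := sq_sqrt (by nlinarith)
  refine ((hasDerivAt_arcsin_chord hax hxb).sub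
    (hasDerivAt_sqrt_mul_arcsin_moebius ha hax hxb)).congr_deriv ?_
  have hbx : b - x ≠ 0 := by linarith
  field_simp
  linear_combination -hS2

theorem continuousOn_edgePrimitive (ha : 0 ≤ a) (hab : a < b) :
    ContinuousOn (edgePrimitive a b) (Set.Icc a b) := by
  refine (continuous_arcsin.comp (by fun_prop)).continuousOn.sub ?_
  -- At `a = 0` the second arcsin jumps at `0`, but its coefficient `√(a / b)` vanishes.
  rcases ha.eq_or_lt with rfl | ha
  · simpa using continuousOn_const
  refine continuousOn_const.mul (continuous_arcsin.comp_continuousOn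
    (continuousOn_id.const_mul _ |>.sub continuousOn_const |>.div (by fun_prop) ?_))
  intro y hy
  have : 0 < y := ha.trans_le hy.1
  have : 0 < b - a := by linarith
  positivity

theorem edgePrimitive_right (hab : a < b) (hb : 0 < b) :
    edgePrimitive a b b = π / 2 - √(a / b) * (π / 2) := by
  have hba : b - a ≠ 0 := by linarith
  have h1 : (2 * b - a - b) / (b - a) = 1 := by field_simp; ring
  have h2 : ((a + b) * b - 2 * a * b) / ((b - a) * b) = 1 := by field_simp; ring
  rw [edgePrimitive, h1, h2, arcsin_one]

theorem edgePrimitive_left (ha : 0 ≤ a) (hab : a < b) :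
    edgePrimitive a b a = -(π / 2) + √(a / b) * (π / 2) := by
  have hba : b - a ≠ 0 := by linarith
  have h1 : (2 * a - a - b) / (b - a) = -1 := by field_simp; ring
  rw [edgePrimitive, h1, arcsin_neg_one]
  rcases ha.eq_or_lt with rfl | ha
  · simp
  have h2 : ((a + b) * a - 2 * a * b) / ((b - a) * a) = -1 := by field_simp; ring
  rw [h2, arcsin_neg_one]
  ring

theorem integral_sqrt_mul_div_mul_sub (ha : 0 ≤ a) (hab : a < b) :
    ∫ x in a..b, √((b - x) * (x - a)) / (x * (b - x)) = π * (1 - √(a / b)) := by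
  have hderiv : ∀ x ∈ Set.Ioo a b,
      HasDerivAt (edgePrimitive a b) (√((b - x) * (x - a)) / (x * (b - x))) x :=
    fun x hx => hasDerivAt_edgePrimitive ha hx.1 hx.2
  have hnonneg : ∀ x ∈ Set.Ioo a b, 0 ≤ √((b - x) * (x - a)) / (x * (b - x)) := by
    intro x hx
    have : 0 < x := ha.trans_lt hx.1
    have : 0 < b - x := by linarith [hx.2]
    positivity
  have hcont := continuousOn_edgePrimitive ha hab
  rw [intervalIntegral.integral_eq_sub_of_hasDerivAt_of_le hab.le hcont hderiv
    (intervalIntegral.intervalIntegrable_deriv_of_nonneg (by rwa [Set.uIcc_of_le hab.le])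
      (by rwa [min_eq_left hab.le, max_eq_right hab.le])
      (by rwa [min_eq_left hab.le, max_eq_right hab.le])),
    edgePrimitive_right hab (ha.trans_lt hab), edgePrimitive_left ha hab]
  ring

end Edge

theorem mp_stieltjes_at_edge (l : ℝ) (hl0 : 0 < l) (hl1 : l ≤ 1) :
    (∫ x in ((1 - Real.sqrt l) ^ 2)..((1 + Real.sqrt l) ^ 2),
        (Real.sqrt (((1 + Real.sqrt l) ^ 2 - x) * (x - (1 - Real.sqrt l) ^ 2)) /
          (2 * Real.pi * l * x)) / ((1 + Real.sqrt l) ^ 2 - x))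
      = 1 / (Real.sqrt l * (1 + Real.sqrt l)) := by
  set s := √l
  have hs0 : 0 < s := sqrt_pos.mpr hl0
  have hs1 : s ≤ 1 := sqrt_le_one.mpr hl1
  have hl : l = s ^ 2 := (sq_sqrt hl0.le).symm
  have hratio : √((1 - s) ^ 2 / (1 + s) ^ 2) = (1 - s) / (1 + s) := by
    rw [← div_pow, sqrt_sq (div_nonneg (sub_nonneg.mpr hs1) (by positivity))]
  have hintegrand : ∀ x, √(((1 + s) ^ 2 - x) * (x - (1 - s) ^ 2)) / (2 * π * l * x) /
      ((1 + s) ^ 2 - x) = (2 * π * l)⁻¹ *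
        (√(((1 + s) ^ 2 - x) * (x - (1 - s) ^ 2)) / (x * ((1 + s) ^ 2 - x))) := fun x => by
    rw [div_div, inv_mul_eq_div, div_div]; congr 1; ring
  simp_rw [hintegrand]
  rw [intervalIntegral.integral_const_mul,
    integral_sqrt_mul_div_mul_sub (sq_nonneg _) (by nlinarith), hratio, hl]
  field_simp
  ring
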